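/- Let u, v, u', v' be nonzero complex numbers. Then u^m v^n + u^{-m} v^{-n} = u'^m v'^n + u'^{-m} v'^{-n} holds for all integers m, n if and only if (u', v') = (u, v) or (u', v') = (u^{-1}, v^{-1}). -/

import Mathlib

/-! The value of the character at `(1, 0)`, `(0, 1)` and `(1, 1)` is `t u`, `t v` and `t (u v)`
with `t a = a + a⁻¹`, and `t a = t b` forces `b = a` or `b = a⁻¹`. This leaves `u'` and `v'`
each equal to the original eigenvalue or its inverse, and the value at `(1, 1)` rules out
inverting only one of them unless that one is `±1`, in which case it equals its inverse. -/

theorem eq_or_eq_inv_of_add_inv_eq_add_inv {K : Type*} [Field K] {a b : K} (ha : a ≠ 0)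
    (hb : b ≠ 0) (h : a + a⁻¹ = b + b⁻¹) : b = a ∨ b = a⁻¹ := by
  have key : (a - b) * (a * b - 1) = 0 := by
    calc (a - b) * (a * b - 1) = a * b * ((a + a⁻¹) - (b + b⁻¹)) := by field_simp; ring
      _ = 0 := by rw [h, sub_self, mul_zero]
  rcases mul_eq_zero.mp key with hab | hab
  · exact Or.inl (sub_eq_zero.mp hab).symm
  · exact Or.inr (eq_inv_of_mul_eq_one_right (sub_eq_zero.mp hab))

theorem prod_eq_or_eq_inv_of_mul_eq_or_eq_inv {G₀ : Type*} [CommGroupWithZero G₀]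
    {x y x' y' : G₀} (hx : x ≠ 0) (hy : y ≠ 0) (hx' : x' = x ∨ x' = x⁻¹)
    (hy' : y' = y ∨ y' = y⁻¹) (hxy : x' * y' = x * y ∨ x' * y' = (x * y)⁻¹) :
    (x', y') = (x, y) ∨ (x', y') = (x⁻¹, y⁻¹) := by
  obtain hx' | hx' := hx' <;> obtain hy' | hy' := hy' <;> subst x' y'
  · exact Or.inl rfl
  · rcases hxy with hxy | hxy
    · have hy_inv : y⁻¹ = y := mul_left_cancel₀ hx hxy
      exact Or.inl (by rw [hy_inv])
    · have hx_inv : x = x⁻¹ := mul_right_cancel₀ (inv_ne_zero hy) (by rwa [mul_inv] at hxy)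
      exact Or.inr (by rw [← hx_inv])
  · rcases hxy with hxy | hxy
    · have hx_inv : x⁻¹ = x := mul_right_cancel₀ hy hxy
      exact Or.inl (by rw [hx_inv])
    · have hy_inv : y = y⁻¹ := mul_left_cancel₀ (inv_ne_zero hx) (by rwa [mul_inv] at hxy)
      exact Or.inr (by rw [← hy_inv])
  · exact Or.inr rfl

/-- Two diagonal representations of `ℤ × ℤ` have the same character
`(m, n) ↦ u^m v^n + u^{-m} v^{-n}` if and only if the eigenvalue pairs agree or are
simultaneously inverted. -/
theorem diagonal_characters_eq_iff
    (u v u' v' : ℂ) (hu : u ≠ 0) (hv : v ≠ 0) (hu' : u' ≠ 0) (hv' : v' ≠ 0) :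
    (∀ m n : ℤ, u ^ m * v ^ n + u ^ (-m) * v ^ (-n)
        = u' ^ m * v' ^ n + u' ^ (-m) * v' ^ (-n))
      ↔ ((u', v') = (u, v) ∨ (u', v') = (u⁻¹, v⁻¹)) := by
  refine ⟨fun h => ?_, ?_⟩
  · have hu'_cases := eq_or_eq_inv_of_add_inv_eq_add_inv hu hu' (by simpa using h 1 0)
    have hv'_cases := eq_or_eq_inv_of_add_inv_eq_add_inv hv hv' (by simpa using h 0 1)
    have huv'_cases := eq_or_eq_inv_of_add_inv_eq_add_inv (mul_ne_zero hu hv)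
      (mul_ne_zero hu' hv') (by rw [mul_inv, mul_inv]; simpa using h 1 1)
    exact prod_eq_or_eq_inv_of_mul_eq_or_eq_inv hu hv hu'_cases hv'_cases huv'_cases
  · rintro (h | h) <;> obtain ⟨rfl, rfl⟩ := Prod.mk.inj h <;> intro m n
    · rfl
    · rw [inv_zpow', inv_zpow', inv_zpow', inv_zpow', neg_neg, neg_neg, add_comm]
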